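/- arXiv:2108.01587 — 3 statements merged into one kernel-verified Lean document; each statement's English description precedes it below -/
import Mathlib

section
/- Let A be an associative ℂ-algebra and let N : A → A be a ℂ-linear endomorphism which is nilpotent, say N^{k+1} = 0. Set T := exp(N) = ∑_{i=0}^{k} (1/i!)·N^i. If T is multiplicative, i.e. T(a·b) = T(a)·T(b) for all a, b ∈ A, then N is a derivation: N(a·b) = N(a)·b + a·N(b) for all a, b ∈ A. -/
open Finset Polynomial PowerSeries

-- vanishing of A-valued polynomial at all naturals implies coefficients vanish
lemma aux_coeffs_zero {V : Type*} [AddCommGroup V] [Module ℂ V] (d : ℕ) (c : ℕ → V)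
    (h : ∀ n : ℕ, ∑ l ∈ Finset.range d, ((n : ℂ)^l) • c l = 0) :
    ∀ l < d, c l = 0 := by
  intro l hl
  rw [← Module.forall_dual_apply_eq_zero_iff ℂ]
  intro φ
  set q : Polynomial ℂ := ∑ m ∈ Finset.range d, Polynomial.C (φ (c m)) * Polynomial.X ^ m with hq
  have hroot : ∀ n : ℕ, q.eval (n : ℂ) = 0 := by
    intro n
    have := congrArg φ (h n)
    rw [hq]
    rw [Polynomial.eval_finset_sum]
    simp only [Polynomial.eval_mul, Polynomial.eval_C, Polynomial.eval_pow, Polynomial.eval_X]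
    rw [← map_zero φ, ← this, map_sum]
    exact Finset.sum_congr rfl fun m _ => by rw [map_smul]; simp [mul_comm]
  have hq0 : q = 0 := by
    apply Polynomial.eq_zero_of_infinite_isRoot
    apply Set.Infinite.mono (s := Set.range ((↑) : ℕ → ℂ))
    · rintro x ⟨n, rfl⟩; exact hroot n
    · exact Set.infinite_range_of_injective Nat.cast_injective
  have : q.coeff l = φ (c l) := by
    rw [hq, Polynomial.finset_sum_coeff]
    rw [Finset.sum_eq_single l]
    · simp
    · intro m _ hml
      rw [Polynomial.coeff_C_mul, Polynomial.coeff_X_pow, if_neg (Ne.symm hml), mul_zero]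
    · intro hnot; exact absurd (Finset.mem_range.2 hl) hnot
  rw [hq0] at this
  simpa using this.symm

section Trunc
variable {E : Type*} [Ring E] [Algebra ℂ E] (N : E) (k : ℕ) (hN : N ^ (k + 1) = 0)

/-- evaluate a power series at a nilpotent element by truncating -/
noncomputable def Fev (p : PowerSeries ℂ) : E := Polynomial.aeval N (PowerSeries.trunc (k+1) p)

lemma Fev_coeffs (p : PowerSeries ℂ) :
    Fev N k p = ∑ i ∈ Finset.range (k+1), (PowerSeries.coeff i p) • N ^ i := by
  rw [Fev, Polynomial.aeval_eq_sum_range' (PowerSeries.natDegree_trunc_lt p k)]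
  refine Finset.sum_congr rfl fun i hi => ?_
  rw [PowerSeries.coeff_trunc, if_pos (Finset.mem_range.1 hi)]

include hN in
lemma Fev_mul (p q : PowerSeries ℂ) : Fev N k (p * q) = Fev N k p * Fev N k q := by
  have hdvd : (Polynomial.X : Polynomial ℂ) ^ (k+1) ∣
      PowerSeries.trunc (k+1) p * PowerSeries.trunc (k+1) q - PowerSeries.trunc (k+1) (p * q) := by
    rw [Polynomial.X_pow_dvd_iff]
    intro m hm
    rw [Polynomial.coeff_sub, Polynomial.coeff_mul, PowerSeries.coeff_trunc, if_pos hm,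
      PowerSeries.coeff_mul, sub_eq_zero]
    refine Finset.sum_congr rfl fun x hx => ?_
    have h1 : x.1 < k + 1 := lt_of_le_of_lt (Finset.HasAntidiagonal.antidiagonal.fst_le hx) hm
    have h2 : x.2 < k + 1 := lt_of_le_of_lt (Finset.HasAntidiagonal.antidiagonal.snd_le hx) hm
    rw [PowerSeries.coeff_trunc, if_pos h1, PowerSeries.coeff_trunc, if_pos h2]
  obtain ⟨r, hr⟩ := hdvd
  have : PowerSeries.trunc (k+1) (p * q) =
      PowerSeries.trunc (k+1) p * PowerSeries.trunc (k+1) q - Polynomial.X ^ (k+1) * r := by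
    rw [← hr]; ring
  rw [Fev, this, map_sub, map_mul, map_mul, map_pow, Polynomial.aeval_X, hN, zero_mul, sub_zero]
  rfl

include hN in
lemma Fev_pow (p : PowerSeries ℂ) (n : ℕ) : Fev N k (p ^ n) = (Fev N k p) ^ n := by
  induction n with
  | zero =>
    simp only [pow_zero]
    rw [Fev, PowerSeries.trunc_one, map_one]
  | succ n ih => rw [pow_succ, pow_succ, Fev_mul N k hN, ih]

lemma Fev_rescale_exp (s : ℂ) :
    Fev N k (PowerSeries.rescale s (PowerSeries.exp ℂ)) =
      ∑ i ∈ Finset.range (k+1), (s ^ i * ((Nat.factorial i : ℂ))⁻¹) • N ^ i := by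
  rw [Fev_coeffs]
  refine Finset.sum_congr rfl fun i _ => ?_
  rw [PowerSeries.coeff_rescale, PowerSeries.coeff_exp]
  norm_num
  
end Trunc

/-- If the exponential `T = ∑_{i=0}^{k} (1/i!) • N^i` of a nilpotent `ℂ`-linear
endomorphism `N` (with `N^(k+1) = 0`) of an associative `ℂ`-algebra `A` is
multiplicative, then `N` is a derivation. -/
theorem stmt_0 {A : Type*} [Ring A] [Algebra ℂ A] (N : Module.End ℂ A) (k : ℕ)
    (hN : N ^ (k + 1) = 0)
    (hT : ∀ a b : A,
      (∑ i ∈ Finset.range (k + 1), ((Nat.factorial i : ℂ)⁻¹) • N ^ i) (a * b) =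
        (∑ i ∈ Finset.range (k + 1), ((Nat.factorial i : ℂ)⁻¹) • N ^ i) a *
          (∑ i ∈ Finset.range (k + 1), ((Nat.factorial i : ℂ)⁻¹) • N ^ i) b) :
    ∀ a b : A, N (a * b) = N a * b + a * N b := by
  intro a b
  rcases Nat.eq_zero_or_pos k with rfl | hk
  · have hN0 : N = 0 := by simpa using hN
    simp [hN0]
  -- T = exp N as an endomorphism
  set T : Module.End ℂ A := Fev N k (PowerSeries.exp ℂ) with hTdef
  have hTeq : T = ∑ i ∈ Finset.range (k + 1), ((Nat.factorial i : ℂ)⁻¹) • N ^ i := by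
    rw [hTdef, Fev_coeffs]
    refine Finset.sum_congr rfl fun i _ => ?_
    rw [PowerSeries.coeff_exp]
    norm_num
  have hTmul : ∀ x y : A, T (x * y) = T x * T y := fun x y => by rw [hTeq]; exact hT x y
  have hTn : ∀ n : ℕ, ∀ x y : A, (T ^ n) (x * y) = (T ^ n) x * (T ^ n) y := by
    intro n
    induction n with
    | zero => intro x y; simp
    | succ n ih =>
      intro x y
      rw [pow_succ', Module.End.mul_apply, Module.End.mul_apply, Module.End.mul_apply, ih, hTmul]
  have hTneq : ∀ n : ℕ, (T ^ n : Module.End ℂ A) =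
      ∑ i ∈ Finset.range (k + 1), (((n : ℂ)) ^ i * ((Nat.factorial i : ℂ))⁻¹) • N ^ i := by
    intro n
    rw [hTdef, ← Fev_pow N k hN, PowerSeries.exp_pow_eq_rescale_exp, Fev_rescale_exp]
  -- the coefficients of the polynomial (in n) identity
  set S := (Finset.range (k + 1)) ×ˢ (Finset.range (k + 1)) with hS
  set w : ℕ × ℕ → A := fun p =>
    (((Nat.factorial p.1 : ℂ))⁻¹ * ((Nat.factorial p.2 : ℂ))⁻¹) • ((N ^ p.1) a * (N ^ p.2) b)
    with hw
  set c : ℕ → A := fun l =>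
    (if l < k + 1 then ((Nat.factorial l : ℂ)⁻¹) • (N ^ l) (a * b) else 0) -
      ∑ p ∈ S.filter (fun p => p.1 + p.2 = l), w p with hc
  have key : ∀ n : ℕ, ∑ l ∈ Finset.range (2 * k + 1), ((n : ℂ)) ^ l • c l = 0 := by
    intro n
    have e1 : ∑ l ∈ Finset.range (2 * k + 1),
        ((n : ℂ)) ^ l • (if l < k + 1 then ((Nat.factorial l : ℂ)⁻¹) • (N ^ l) (a * b) else 0) =
        (T ^ n) (a * b) := by
      have hsub : Finset.range (k + 1) ⊆ Finset.range (2 * k + 1) :=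
        Finset.range_subset_range.2 (by omega)
      rw [← Finset.sum_subset hsub (fun x hx hnx => by
        rw [if_neg (by simpa using hnx), smul_zero])]
      rw [hTneq, LinearMap.sum_apply]
      refine Finset.sum_congr rfl fun l hl => ?_
      rw [if_pos (Finset.mem_range.1 hl), LinearMap.smul_apply, smul_smul]
    have e2 : ∑ l ∈ Finset.range (2 * k + 1),
        ((n : ℂ)) ^ l • ∑ p ∈ S.filter (fun p => p.1 + p.2 = l), w p =
        (T ^ n) a * (T ^ n) b := by
      have step1 : ∑ l ∈ Finset.range (2 * k + 1),
          ((n : ℂ)) ^ l • ∑ p ∈ S.filter (fun p => p.1 + p.2 = l), w p =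
          ∑ l ∈ Finset.range (2 * k + 1),
            ∑ p ∈ S.filter (fun p => p.1 + p.2 = l), ((n : ℂ)) ^ (p.1 + p.2) • w p := by
        refine Finset.sum_congr rfl fun l _ => ?_
        rw [Finset.smul_sum]
        refine Finset.sum_congr rfl fun p hp => ?_
        rw [(Finset.mem_filter.1 hp).2]
      have hmaps : ∀ p ∈ S, p.1 + p.2 ∈ Finset.range (2 * k + 1) := by
        intro p hp
        rw [hS, Finset.mem_product] at hp
        have h1 := Finset.mem_range.1 hp.1
        have h2 := Finset.mem_range.1 hp.2
        exact Finset.mem_range.2 (by omega)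
      rw [step1, Finset.sum_fiberwise_of_maps_to hmaps]
      rw [hTneq, LinearMap.sum_apply, LinearMap.sum_apply, Finset.sum_mul_sum, hS,
        Finset.sum_product]
      refine Finset.sum_congr rfl fun i _ => Finset.sum_congr rfl fun j _ => ?_
      rw [hw]
      simp only [LinearMap.smul_apply]
      rw [smul_mul_assoc, mul_smul_comm, smul_smul, smul_smul]
      congr 1
      ring
    simp only [hc, smul_sub, Finset.sum_sub_distrib]
    rw [e1, e2, hTn n a b, sub_self]
  have hc1 : c 1 = 0 := aux_coeffs_zero (2 * k + 1) c key 1 (by omega)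
  have hfil : S.filter (fun p => p.1 + p.2 = 1) = {(1, 0), (0, 1)} := by
    ext ⟨i, j⟩
    simp only [Finset.mem_filter, hS, Finset.mem_product, Finset.mem_range,
      Finset.mem_insert, Finset.mem_singleton, Prod.mk.injEq]
    omega
  simp only [hc] at hc1
  rw [hfil] at hc1
  simp only [if_pos (by omega : 1 < k + 1)] at hc1
  rw [Finset.sum_pair (by decide : ((1 : ℕ), (0 : ℕ)) ≠ (0, 1))] at hc1
  simp only [hw, Nat.factorial_one, Nat.factorial_zero, Nat.cast_one, inv_one, one_mul,
    mul_one, pow_one, pow_zero, Module.End.one_apply, one_smul] at hc1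
  rw [sub_eq_zero] at hc1
  exact hc1
end

section
/- Let V be a finite-dimensional vector space over ℂ and q : V × V → ℂ a nondegenerate symmetric bilinear form. Let N : V → V be a ℂ-linear map satisfying N ∘ N = 0 and q(N(x), y) + q(x, N(y)) = 0 for all x, y ∈ V, and suppose that w₁, w₂ form a basis of the range of N (so N has rank 2). Then there exists a nonzero scalar c ∈ ℂ such that N(x) = c·(q(w₂, x)·w₁ − q(w₁, x)·w₂) for all x ∈ V. -/
private lemma aux_dual {V : Type*} [AddCommGroup V] [Module ℂ V] [FiniteDimensional ℂ V]
    (f g : V →ₗ[ℂ] ℂ) (h : ∀ c : ℂ, f ≠ c • g) : ∃ u : V, f u = 1 ∧ g u = 0 := by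
  have h1 : ¬ (LinearMap.ker g ≤ LinearMap.ker f) := by
    intro hle
    have hmem : f ∈ Submodule.span ℂ (Set.range (fun _ : Unit => g)) :=
      mem_span_of_iInf_ker_le_ker (by simpa using hle)
    rw [Set.range_const, Submodule.mem_span_singleton] at hmem
    obtain ⟨c, hc⟩ := hmem
    exact h c hc.symm
  obtain ⟨u', hgu', hfu'⟩ := SetLike.not_le_iff_exists.mp h1
  have hgu0 : g u' = 0 := hgu'
  have hfu0 : f u' ≠ 0 := hfu'
  refine ⟨(f u')⁻¹ • u', ?_, ?_⟩
  · simp [inv_mul_cancel₀ hfu0]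
  · simp [hgu0]

/-- A square-zero skew-adjoint operator of rank two with respect to a
nondegenerate symmetric bilinear form is, up to a nonzero scalar, given by
`N = q(w₂,·)w₁ − q(w₁,·)w₂` for any basis `w₁, w₂` of its range. -/
theorem stmt_3 {V : Type*} [AddCommGroup V] [Module ℂ V] [FiniteDimensional ℂ V]
    (q : V →ₗ[ℂ] V →ₗ[ℂ] ℂ) (hsymm : ∀ x y : V, q x y = q y x)
    (hnondeg : ∀ x : V, (∀ y : V, q x y = 0) → x = 0)
    (N : V →ₗ[ℂ] V) (hN2 : N ∘ₗ N = 0)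
    (hskew : ∀ x y : V, q (N x) y + q x (N y) = 0)
    (w₁ w₂ : V) (hindep : LinearIndependent ℂ ![w₁, w₂])
    (hspan : Submodule.span ℂ {w₁, w₂} = LinearMap.range N) :
    ∃ c : ℂ, c ≠ 0 ∧ ∀ x : V, N x = c • (q w₂ x • w₁ - q w₁ x • w₂) := by
  rw [linearIndependent_fin2] at hindep
  have hw2 : (![w₁, w₂] 1 : V) ≠ 0 := hindep.1
  have hw2ne : w₂ ≠ 0 := by simpa using hw2
  have hne12 : ∀ a : ℂ, a • w₂ ≠ w₁ := by
    intro a; simpa using hindep.2 a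
  have hw1ne : w₁ ≠ 0 := by
    intro h; exact hne12 0 (by simp [h])
  -- w₁, w₂ lie in the range of N, hence N w₁ = N w₂ = 0
  have hNker : ∀ z : V, z ∈ LinearMap.range N → N z = 0 := by
    rintro z ⟨y, rfl⟩
    have := LinearMap.congr_fun hN2 y
    simpa using this
  have hw1mem : w₁ ∈ LinearMap.range N := by
    rw [← hspan]; exact Submodule.subset_span (Set.mem_insert _ _)
  have hw2mem : w₂ ∈ LinearMap.range N := by
    rw [← hspan]; exact Submodule.subset_span (Set.mem_insert_of_mem _ rfl)
  have hNw1 : N w₁ = 0 := hNker _ hw1mem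
  have hNw2 : N w₂ = 0 := hNker _ hw2mem
  -- functionals q w₁ and q w₂ are independent
  have hqind : ∀ c : ℂ, q w₁ ≠ c • q w₂ := by
    intro c hc
    apply hne12 c
    have : w₁ - c • w₂ = 0 := by
      apply hnondeg
      intro y
      have := LinearMap.congr_fun hc y
      simp only [LinearMap.smul_apply, smul_eq_mul] at this
      simp [this]
    have : w₁ = c • w₂ := by linear_combination (norm := module) this
    exact this.symm
  have hqind' : ∀ c : ℂ, q w₂ ≠ c • q w₁ := by
    intro c hc
    rcases eq_or_ne c 0 with rfl | hc0
    · apply hw2ne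
      apply hnondeg
      intro y
      simpa using LinearMap.congr_fun hc y
    · exact hqind c⁻¹ (by rw [hc, smul_smul, inv_mul_cancel₀ hc0, one_smul])
  obtain ⟨u, hfu, hgu⟩ := aux_dual (q w₁) (q w₂) hqind
  obtain ⟨v, hgv, hfv⟩ := aux_dual (q w₂) (q w₁) hqind'
  -- decompose N u and N v
  have hmem : ∀ x : V, ∃ a b : ℂ, a • w₁ + b • w₂ = N x := by
    intro x
    rw [← Submodule.mem_span_pair, hspan]
    exact ⟨x, rfl⟩
  obtain ⟨a₁, b₁, hNu⟩ := hmem u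
  obtain ⟨a₂, b₂, hNv⟩ := hmem v
  -- q x (N y) computations
  have key : ∀ (x : V) (a b : ℂ) (y : V), a • w₁ + b • w₂ = N y →
      q x (N y) = a * q w₁ x + b * q w₂ x := by
    intro x a b y hy
    rw [← hy]
    simp [hsymm x w₁, hsymm x w₂, mul_comm]
  -- a₁ = 0 : from q u (N u) = 0
  have hquNu : q u (N u) = 0 := by
    have h1 := hskew u u
    rw [hsymm (N u) u] at h1
    linear_combination h1 / 2
  have ha₁ : a₁ = 0 := by
    have := key u a₁ b₁ u hNu
    rw [hquNu, hfu, hgu] at this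
    linear_combination -this
  -- b₂ = 0 : from q v (N v) = 0
  have hqvNv : q v (N v) = 0 := by
    have h1 := hskew v v
    rw [hsymm (N v) v] at h1
    linear_combination h1 / 2
  have hb₂ : b₂ = 0 := by
    have := key v a₂ b₂ v hNv
    rw [hqvNv, hfv, hgv] at this
    linear_combination -this
  -- b₁ + a₂ = 0 : from q (N u) v + q u (N v) = 0
  have hrel : b₁ + a₂ = 0 := by
    have h1 := hskew u v
    rw [hsymm (N u) v] at h1
    rw [key v a₁ b₁ u hNu, key u a₂ b₂ v hNv] at h1
    rw [hfu, hgu, hfv, hgv, ha₁, hb₂] at h1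
    linear_combination h1
  -- general formula
  have hform : ∀ x : V, N x = (-b₁) • (q w₂ x • w₁ - q w₁ x • w₂) := by
    intro x
    obtain ⟨a, b, hNx⟩ := hmem x
    have hax : a = -b₁ * q w₂ x := by
      have h1 := hskew u x
      rw [hsymm (N u) x] at h1
      rw [key u a b x hNx, key x a₁ b₁ u hNu, hfu, hgu, ha₁] at h1
      linear_combination h1
    have hbx : b = b₁ * q w₁ x := by
      have h1 := hskew v x
      rw [hsymm (N v) x] at h1
      rw [key v a b x hNx, key x a₂ b₂ v hNv, hfv, hgv, hb₂] at h1
      linear_combination h1 - q w₁ x * hrel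
    rw [← hNx, hax, hbx]
    module
  refine ⟨-b₁, ?_, hform⟩
  intro hb
  apply hw1ne
  obtain ⟨y, hy⟩ := hw1mem
  rw [← hy, hform y, hb]
  simp
end

section
/- Let V be a vector space over ℂ and let f₁, f₂, g₁, g₂ : V → ℂ be linear functionals such that g₁ and g₂ are linearly independent and f₁(v)·g₁(v) + f₂(v)·g₂(v) = 0 for all v ∈ V. Then there exists c ∈ ℂ such that f₁ = c·g₂ and f₂ = −c·g₁. -/
/-- If `g₁, g₂` are linearly independent linear functionals and
`f₁(v)g₁(v) + f₂(v)g₂(v) = 0` for all `v`, then `f₁ = c·g₂` and `f₂ = −c·g₁`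
for some scalar `c`. -/
theorem stmt_4 {V : Type*} [AddCommGroup V] [Module ℂ V]
    (f₁ f₂ g₁ g₂ : V →ₗ[ℂ] ℂ)
    (hindep : LinearIndependent ℂ ![g₁, g₂])
    (h : ∀ v : V, f₁ v * g₁ v + f₂ v * g₂ v = 0) :
    ∃ c : ℂ, f₁ = c • g₂ ∧ f₂ = -c • g₁ := by
  rw [LinearIndependent.pair_iff] at hindep
  -- the map v ↦ (g₁ v, g₂ v) is surjective
  set Φ : V →ₗ[ℂ] ℂ × ℂ := g₁.prod g₂ with hΦ
  have hsurj : LinearMap.range Φ = ⊤ := by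
    by_contra hne
    obtain ⟨φ, hφ0, hφ⟩ := Submodule.exists_dual_map_eq_bot_of_lt_top
      (lt_top_iff_ne_top.2 hne) inferInstance
    have key : ∀ v : V, φ (1, 0) * g₁ v + φ (0, 1) * g₂ v = 0 := by
      intro v
      have : φ (Φ v) = 0 := by
        have : φ (Φ v) ∈ (LinearMap.range Φ).map φ :=
          Submodule.mem_map_of_mem (LinearMap.mem_range_self _ _)
        rwa [hφ, Submodule.mem_bot] at this
      have hexp : Φ v = g₁ v • ((1 : ℂ), (0 : ℂ)) + g₂ v • ((0 : ℂ), (1 : ℂ)) := by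
        simp [hΦ, Prod.ext_iff]
      rw [hexp, map_add, map_smul, map_smul, smul_eq_mul, smul_eq_mul] at this
      linear_combination this
    have := hindep (φ (1, 0)) (φ (0, 1)) (by
      ext v
      simpa using key v)
    apply hφ0
    refine LinearMap.ext fun p => ?_
    obtain ⟨x, y⟩ := p
    have hexp : ((x, y) : ℂ × ℂ) = x • ((1 : ℂ), (0 : ℂ)) + y • ((0 : ℂ), (1 : ℂ)) := by
      simp [Prod.ext_iff]
    rw [hexp, map_add, map_smul, map_smul]
    simp [this.1, this.2]
  obtain ⟨e₁, he₁⟩ : ∃ e₁, g₁ e₁ = 1 ∧ g₂ e₁ = 0 := by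
    have : ((1 : ℂ), (0 : ℂ)) ∈ LinearMap.range Φ := hsurj ▸ Submodule.mem_top
    obtain ⟨e, he⟩ := this
    exact ⟨e, by simpa [hΦ, Prod.ext_iff] using he⟩
  obtain ⟨e₂, he₂⟩ : ∃ e₂, g₁ e₂ = 0 ∧ g₂ e₂ = 1 := by
    have : ((0 : ℂ), (1 : ℂ)) ∈ LinearMap.range Φ := hsurj ▸ Submodule.mem_top
    obtain ⟨e, he⟩ := this
    exact ⟨e, by simpa [hΦ, Prod.ext_iff] using he⟩
  -- f₁, f₂ vanish on ker g₁ ∩ ker g₂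
  have hker : ∀ u : V, g₁ u = 0 → g₂ u = 0 → f₁ u = 0 ∧ f₂ u = 0 := by
    intro u hu1 hu2
    refine hindep (f₁ u) (f₂ u) ?_
    ext w
    have h1 := h (u + w)
    have h2 := h w
    simp only [map_add, hu1, hu2, zero_add] at h1
    simp only [LinearMap.add_apply, LinearMap.smul_apply, LinearMap.zero_apply, smul_eq_mul]
    linear_combination h1 - h2
  have hf1e1 : f₁ e₁ = 0 := by
    have := h e₁; rw [he₁.1, he₁.2] at this; linear_combination this
  have hf2e2 : f₂ e₂ = 0 := by
    have := h e₂; rw [he₂.1, he₂.2] at this; linear_combination this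
  have hf2e1 : f₂ e₁ = -(f₁ e₂) := by
    have := h (e₁ + e₂)
    simp only [map_add, he₁.1, he₁.2, he₂.1, he₂.2] at this
    linear_combination this - hf1e1 - hf2e2
  have hd : ∀ v : V, f₁ v = g₁ v * f₁ e₁ + g₂ v * f₁ e₂ ∧
      f₂ v = g₁ v * f₂ e₁ + g₂ v * f₂ e₂ := by
    intro v
    obtain ⟨h1, h2⟩ := hker (v - g₁ v • e₁ - g₂ v • e₂)
      (by simp [he₁.1, he₂.1]) (by simp [he₁.2, he₂.2])
    simp only [map_sub, map_smul, smul_eq_mul] at h1 h2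
    exact ⟨by linear_combination h1, by linear_combination h2⟩
  refine ⟨f₁ e₂, ?_, ?_⟩ <;> ext v
  · have := (hd v).1
    simp only [LinearMap.smul_apply, smul_eq_mul]
    rw [this, hf1e1]; ring
  · have := (hd v).2
    simp only [LinearMap.smul_apply, LinearMap.neg_apply, smul_eq_mul]
    rw [this, hf2e2, hf2e1]; ring
end
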